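/- arXiv:1411.0728 — 5 statements merged into one kernel-verified Lean document; each statement's English description precedes it below -/
import Mathlib

section
/- Let D ⊆ ℝ^K be a nonempty closed convex set and let x : ℝ → ℝ^K be differentiable. Suppose that for every t ≥ 0 there exists c_t ∈ ℝ^K such that x'(t) = c_t − x(t) and ⟨c_t − P_D(x(t)), x(t) − P_D(x(t))⟩ ≤ 0. Then for every t ≥ 0, infDist(x(t), D)² ≤ infDist(x(0), D)² · e^{−2t}. In particular, x(t) converges to D as t → ∞ and D is a global attractor for the dynamics. -/
/-!
Write `V t = infDist (x t) D ^ 2`. `V` need not be differentiable, but at each time `s` it is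
touched from above by the smooth function `z ↦ ‖x z - P (x s)‖ ^ 2`, whose derivative at `s` is
`2 ⟪x s - P (x s), c - x s⟫ ≤ -2 V s` by Blackwell's separation condition. Hence the right
Dini derivative of `V` is at most `-2 V`, and Grönwall's inequality gives `V t ≤ V 0 e^{-2t}`.
-/

open Set Metric Filter Topology
open scoped RealInnerProductSpace

theorem Metric.infDist_eq_dist_of_forall_dist_le {α : Type*} [PseudoMetricSpace α] {s : Set α}
    {x p : α} (hp : p ∈ s) (hmin : ∀ z ∈ s, dist x p ≤ dist x z) : infDist x s = dist x p :=
  le_antisymm (infDist_le_dist_of_mem hp) ((le_infDist ⟨p, hp⟩).2 hmin)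

theorem le_mul_exp_of_hasDerivWithinAt_majorant {V g' : ℝ → ℝ} {g : ℝ → ℝ → ℝ} {K a b : ℝ}
    (hV : ContinuousOn V (Icc a b)) (hle : ∀ s ∈ Ico a b, ∀ z, V z ≤ g s z)
    (heq : ∀ s ∈ Ico a b, g s s = V s)
    (hg : ∀ s ∈ Ico a b, HasDerivWithinAt (g s) (g' s) (Ici s) s)
    (bound : ∀ s ∈ Ico a b, g' s ≤ K * V s) :
    ∀ t ∈ Icc a b, V t ≤ V a * Real.exp (K * (t - a)) := by
  have slope_le : ∀ s ∈ Ico a b, ∀ r, g' s < r →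
      ∃ᶠ z in 𝓝[>] s, (z - s)⁻¹ * (V z - V s) < r := by
    intro s hs r hr
    refine ((hg s hs).liminf_right_slope_le hr).and_eventually self_mem_nhdsWithin |>.mono ?_
    rintro z ⟨hslope, hsz : s < z⟩
    calc (z - s)⁻¹ * (V z - V s)
        ≤ (z - s)⁻¹ * (g s z - g s s) :=
          mul_le_mul_of_nonneg_left (by linarith [hle s hs z, heq s hs])
            (inv_nonneg.2 (sub_nonneg.2 hsz.le))
      _ < r := hslope
  intro t ht
  simpa [gronwallBound_ε0] using le_gronwallBound_of_liminf_deriv_right_le (K := K) (ε := 0)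
    hV slope_le le_rfl (fun s hs => (bound s hs).trans_eq (add_zero _).symm) t ht

section InnerProductSpace

variable {E : Type*} [NormedAddCommGroup E] [InnerProductSpace ℝ E]

theorem inner_sub_sub_le_neg_norm_sq {c y p : E} (hsep : ⟪c - p, y - p⟫ ≤ 0) :
    ⟪y - p, c - y⟫ ≤ -‖y - p‖ ^ 2 := by
  have hsplit : c - y = (c - p) - (y - p) := by abel
  rw [hsplit, inner_sub_right, real_inner_comm, real_inner_self_eq_norm_sq]
  linarith

theorem infDist_sq_le_mul_exp_of_separation {D : Set E} {P : E → E}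
    (hP : ∀ y, P y ∈ D ∧ ∀ z ∈ D, dist y (P y) ≤ dist y z)
    {x : ℝ → E} (hx : Differentiable ℝ x)
    (hdrift : ∀ t : ℝ, 0 ≤ t → ∃ c : E, deriv x t = c - x t ∧ ⟪c - P (x t), x t - P (x t)⟫ ≤ 0)
    {t : ℝ} (ht : 0 ≤ t) :
    infDist (x t) D ^ 2 ≤ infDist (x 0) D ^ 2 * Real.exp (-2 * t) := by
  have hdist : ∀ y, infDist y D = ‖y - P y‖ := fun y => by
    rw [infDist_eq_dist_of_forall_dist_le (hP y).1 (hP y).2, dist_eq_norm]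
  have decay := le_mul_exp_of_hasDerivWithinAt_majorant (K := -2) (a := 0) (b := t)
    (V := fun s => infDist (x s) D ^ 2) (g := fun s z => ‖x z - P (x s)‖ ^ 2)
    (g' := fun s => 2 * ⟪x s - P (x s), deriv x s⟫)
    (((continuous_infDist_pt D).comp hx.continuous).pow 2).continuousOn
    (fun s _ z => pow_le_pow_left₀ infDist_nonneg
      (by simpa [dist_eq_norm] using infDist_le_dist_of_mem (x := x z) (hP (x s)).1) 2)
    (fun s _ => by simp only [hdist])
    (fun s _ => ((hx s).hasDerivAt.sub_const _).norm_sq.hasDerivWithinAt)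
    (fun s hs => by
      obtain ⟨c, hc, hsep⟩ := hdrift s hs.1
      simp only [hc, hdist]
      linarith [inner_sub_sub_le_neg_norm_sq hsep])
    t ⟨ht, le_rfl⟩
  simpa using decay

end InnerProductSpace

theorem tendsto_zero_of_sq_le_mul_exp {f : ℝ → ℝ} {C : ℝ} (hf : ∀ t, 0 ≤ f t)
    (h : ∀ t : ℝ, 0 ≤ t → f t ^ 2 ≤ C ^ 2 * Real.exp (-2 * t)) : Tendsto f atTop (𝓝 0) := by
  have hle : ∀ t : ℝ, 0 ≤ t → f t ≤ |C| * Real.exp (-t) := fun t ht => by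
    rw [← sq_le_sq₀ (hf t) (by positivity), mul_pow, sq_abs, ← Real.exp_nat_mul]
    simpa [neg_mul] using h t ht
  have hbound : Tendsto (fun t => |C| * Real.exp (-t)) atTop (𝓝 0) := by
    simpa using Real.tendsto_exp_neg_atTop_nhds_zero.const_mul |C|
  exact squeeze_zero' (Eventually.of_forall hf) ((eventually_ge_atTop 0).mono hle) hbound

theorem stmt2_general {K : ℕ} (D : Set (EuclideanSpace ℝ (Fin K)))
    (P : EuclideanSpace ℝ (Fin K) → EuclideanSpace ℝ (Fin K))
    (hP : ∀ y, P y ∈ D ∧ ∀ z ∈ D, dist y (P y) ≤ dist y z)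
    (x : ℝ → EuclideanSpace ℝ (Fin K)) (hx : Differentiable ℝ x)
    (hdrift : ∀ t : ℝ, 0 ≤ t → ∃ c : EuclideanSpace ℝ (Fin K),
      deriv x t = c - x t ∧ ⟪c - P (x t), x t - P (x t)⟫ ≤ 0) :
    (∀ t : ℝ, 0 ≤ t →
        infDist (x t) D ^ 2 ≤ infDist (x 0) D ^ 2 * Real.exp (-2 * t)) ∧
      Tendsto (fun t => infDist (x t) D) atTop (𝓝 0) := by
  have decay := fun t ht => infDist_sq_le_mul_exp_of_separation hP hx hdrift (t := t) ht
  exact ⟨decay, tendsto_zero_of_sq_le_mul_exp (fun _ => infDist_nonneg) decay⟩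

/-- Lyapunov decay for the differential-inclusion trajectory with
Blackwell's separation condition relative to a nonempty closed convex set `D`:
the squared distance to `D` decays like `e^{−2t}`, and in particular the
trajectory converges to `D` (so `D` is a global attractor for the dynamics). -/
theorem stmt2 {K : ℕ} (D : Set (EuclideanSpace ℝ (Fin K)))
    (hne : D.Nonempty) (hcl : IsClosed D) (hconv : Convex ℝ D)
    (P : EuclideanSpace ℝ (Fin K) → EuclideanSpace ℝ (Fin K))
    (hP : ∀ y, P y ∈ D ∧ ∀ z ∈ D, dist y (P y) ≤ dist y z)
    (x : ℝ → EuclideanSpace ℝ (Fin K)) (hx : Differentiable ℝ x)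
    (hdrift : ∀ t : ℝ, 0 ≤ t → ∃ c : EuclideanSpace ℝ (Fin K),
      deriv x t = c - x t ∧ ⟪c - P (x t), x t - P (x t)⟫ ≤ 0) :
    (∀ t : ℝ, 0 ≤ t →
        infDist (x t) D ^ 2 ≤ infDist (x 0) D ^ 2 * Real.exp (-2 * t)) ∧
      Tendsto (fun t => infDist (x t) D) atTop (𝓝 0) :=
  stmt2_general D P hP x hx hdrift
end

section
/- Let D ⊆ ℝ^m be a nonempty compact set, x ∈ ℝ^K, and g : ℝ^K × ℝ^m → ℝ (with only the values g(y, z) for z ∈ D relevant). Assume: (A1) g is bounded on ℝ^K × D and g(·, z) is differentiable at x uniformly in z ∈ D, i.e., there exist vectors D_x g(x,z) ∈ ℝ^K such that for every ε > 0 there is δ > 0 with |g(y,z) − g(x,z) − ⟨D_x g(x,z), y − x⟩| ≤ ε·‖y − x‖ for all z ∈ D and all y with ‖y − x‖ < δ; (A2) z ↦ D_x g(x, z) is continuous on D and z ↦ g(x, z) is lower semicontinuous on D. Define V(y) := inf_{z∈D} g(y, z), P̃_D(x) := {z ∈ D : V(x) = g(x,z)}, and Y(x) := {D_x g(x,z)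 : z ∈ P̃_D(x)}. Then Y(x) is nonempty and the superdifferential satisfies D⁺V(x) = closed convex hull of Y(x). -/
open Filter Topology
open scoped RealInnerProductSpace

/-- The superdifferential `D⁺V(x)`: the set of `p` with
`limsup_{y→x} (V(y) − V(x) − ⟪p, y − x⟫)/‖y − x‖ ≤ 0`. -/
noncomputable def superDiff {K : ℕ} (V : EuclideanSpace ℝ (Fin K) → ℝ)
    (x : EuclideanSpace ℝ (Fin K)) : Set (EuclideanSpace ℝ (Fin K)) :=
  {p | Filter.limsup
      (fun y => (((V y - V x - ⟪p, y - x⟫) / ‖y - x‖ : ℝ) : EReal)) (𝓝[≠] x)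
    ≤ 0}

/-!
Each `Dg z` with `z` a minimiser of `g x` is a supergradient of `V`, because `V ≤ g(·, z)`
with equality at `x`; and `D⁺V(x)` is closed and convex. Conversely, if `p` lay outside the
closed convex hull of `Y`, a separating direction `w` would give `⟪p, w⟫ < u < ⟪Dg z, w⟫` for
every minimiser `z`. The `z ∈ D` with `⟪Dg z, w⟫ ≤ u` form a compact set on which `g x` stays a
positive distance above `V x`, so for small `t > 0` every `g (x + t w) z`, hence
`V (x + t w)`, is at least `V x + t (u - o(1))`. This contradicts the supergradient bound
`V (x + t w) ≤ V x + t (⟪p, w⟫ + o(1))`.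
-/

open Set

theorem IsCompact.inter_preimage_of_continuousOn {X Y : Type*} [TopologicalSpace X]
    [TopologicalSpace Y] {s : Set X} {f : X → Y} {t : Set Y} (hs : IsCompact s)
    (hf : ContinuousOn f s) (ht : IsClosed t) : IsCompact (s ∩ f ⁻¹' t) := by
  obtain ⟨u, hu, hfu⟩ := continuousOn_iff_isClosed.1 hf t ht
  rw [inter_comm, hfu, inter_comm]
  exact hs.inter_right hu

theorem LowerSemicontinuousOn.exists_pos_add_le {X : Type*} [TopologicalSpace X] {s : Set X}
    {f : X → ℝ} (hf : LowerSemicontinuousOn f s) (hs : IsCompact s) {a : ℝ}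
    (ha : ∀ z ∈ s, a < f z) : ∃ ρ > 0, ∀ z ∈ s, a + ρ ≤ f z := by
  rcases s.eq_empty_or_nonempty with rfl | hne
  · exact ⟨1, one_pos, by simp⟩
  obtain ⟨z₀, hz₀, hmin⟩ := hf.exists_isMinOn hne hs
  exact ⟨f z₀ - a, sub_pos.2 (ha z₀ hz₀), fun z hz => by linarith [isMinOn_iff.1 hmin z hz]⟩

theorem exists_inner_lt_of_notMem_of_convex {E : Type*} [NormedAddCommGroup E]
    [InnerProductSpace ℝ E] [CompleteSpace E] {C : Set E} {p : E} (hconv : Convex ℝ C)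
    (hclosed : IsClosed C) (hp : p ∉ C) :
    ∃ w : E, ∃ u : ℝ, ⟪p, w⟫ < u ∧ ∀ q ∈ C, u < ⟪q, w⟫ := by
  obtain ⟨f, u, hpu, hu⟩ := geometric_hahn_banach_point_closed hconv hclosed hp
  refine ⟨(InnerProductSpace.toDual ℝ E).symm f, u, ?_, fun q hq => ?_⟩
  · rwa [real_inner_comm, InnerProductSpace.toDual_symm_apply]
  · rw [real_inner_comm, InnerProductSpace.toDual_symm_apply]
    exact hu q hq

theorem tendsto_add_smul_nhdsGT_zero {E : Type*} [NormedAddCommGroup E] [NormedSpace ℝ E]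
    (x w : E) : Tendsto (fun t : ℝ => x + t • w) (𝓝[>] 0) (𝓝 x) := by
  have : Continuous fun t : ℝ => x + t • w := by fun_prop
  simpa using (this.tendsto 0).mono_left nhdsWithin_le_nhds

section Envelope

variable {E Z : Type*}

noncomputable def envelope (g : E → Z → ℝ) (D : Set Z) (y : E) : ℝ :=
  sInf (g y '' D)

variable {g : E → Z → ℝ} {D : Set Z} {x y : E} {z : Z}

theorem envelope_le (hbdd : BddBelow (g y '' D)) (hz : z ∈ D) : envelope g D y ≤ g y z :=
  csInf_le hbdd (mem_image_of_mem _ hz)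

theorem le_envelope (hne : D.Nonempty) {c : ℝ} (h : ∀ z ∈ D, c ≤ g y z) :
    c ≤ envelope g D y :=
  le_csInf (hne.image _) (forall_mem_image.2 h)

theorem exists_envelope_eq [TopologicalSpace Z] (hne : D.Nonempty) (hcomp : IsCompact D)
    (hlsc : LowerSemicontinuousOn (g x) D) : ∃ z ∈ D, envelope g D x = g x z := by
  obtain ⟨z, hz, hmin⟩ := hlsc.exists_isMinOn hne hcomp
  exact ⟨z, hz, IsLeast.csInf_eq ⟨mem_image_of_mem _ hz, forall_mem_image.2 hmin⟩⟩

variable [NormedAddCommGroup E] [InnerProductSpace ℝ E]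

def HasUniformGradientAt (g : E → Z → ℝ) (Dg : Z → E) (D : Set Z) (x : E) : Prop :=
  ∀ ε > (0 : ℝ), ∃ δ > (0 : ℝ), ∀ z ∈ D, ∀ y,
    ‖y - x‖ < δ → |g y z - g x z - ⟪Dg z, y - x⟫| ≤ ε * ‖y - x‖

variable {Dg : Z → E}

theorem HasUniformGradientAt.eventually_le_add_smul (hdiff : HasUniformGradientAt g Dg D x)
    (w : E) {ε : ℝ} (hε : 0 < ε) :
    ∀ᶠ t in 𝓝[>] (0 : ℝ), ∀ z ∈ D, g x z + t * (⟪Dg z, w⟫ - ε * ‖w‖) ≤ g (x + t • w) z := by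
  obtain ⟨δ, hδ, hgδ⟩ := hdiff ε hε
  filter_upwards [(tendsto_add_smul_nhdsGT_zero x w).eventually (Metric.ball_mem_nhds x hδ),
    self_mem_nhdsWithin] with t htδ (ht : 0 < t) z hz
  have := neg_le_of_abs_le (hgδ z hz _ (by rwa [← dist_eq_norm]))
  simp only [add_sub_cancel_left, inner_smul_right, norm_smul, Real.norm_of_nonneg ht.le]
    at this
  linarith

theorem eventually_le_envelope_add_smul [TopologicalSpace Z] (hne : D.Nonempty)
    (hcomp : IsCompact D) (hbdd : BddBelow (g x '' D)) (hdiff : HasUniformGradientAt g Dg D x)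
    (hDg : ContinuousOn Dg D) (hlsc : LowerSemicontinuousOn (g x) D) {w : E} {c : ℝ}
    (hc : ∀ z ∈ D, envelope g D x = g x z → c < ⟪Dg z, w⟫) {ε : ℝ} (hε : 0 < ε) :
    ∀ᶠ t in 𝓝[>] (0 : ℝ), envelope g D x + t * (c - ε * ‖w‖) ≤ envelope g D (x + t • w) := by
  have hDgw : ContinuousOn (fun z => ⟪Dg z, w⟫) D := hDg.inner continuousOn_const
  -- On the compact set where `⟪Dg z, w⟫ ≤ c` there is no minimiser, hence a gap `ρ`.
  obtain ⟨ρ, hρ, hgap⟩ := (hlsc.mono inter_subset_left).exists_pos_add_le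
    (hcomp.inter_preimage_of_continuousOn hDgw isClosed_Iic)
    fun z hz => (envelope_le hbdd hz.1).lt_of_ne fun h => (hc z hz.1 h).not_ge hz.2
  obtain ⟨C, hC⟩ := hcomp.exists_bound_of_continuousOn hDgw
  have hsmall : ∀ᶠ t in 𝓝[>] (0 : ℝ), t * (C + c) < ρ := by
    have : Tendsto (fun t : ℝ => t * (C + c)) (𝓝 0) (𝓝 0) := by
      simpa using (continuous_mul_const (C + c)).tendsto 0
    exact (this.eventually (gt_mem_nhds hρ)).filter_mono nhdsWithin_le_nhds
  filter_upwards [hdiff.eventually_le_add_smul w hε, hsmall, self_mem_nhdsWithin]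
    with t hg htρ (ht : 0 < t)
  refine le_envelope hne fun z hz => (hg z hz).trans' ?_
  by_cases hzc : ⟪Dg z, w⟫ ≤ c
  · have hgz := hgap z ⟨hz, hzc⟩
    have := mul_le_mul_of_nonneg_left (neg_le_of_abs_le (hC z hz)) ht.le
    linarith
  · have := mul_le_mul_of_nonneg_left (not_le.1 hzc).le ht.le
    linarith [envelope_le hbdd hz]

end Envelope

section SuperDiff

variable {K : ℕ} {V : EuclideanSpace ℝ (Fin K) → ℝ} {x p : EuclideanSpace ℝ (Fin K)}

theorem mem_superDiff_iff :
    p ∈ superDiff V x ↔ ∀ ε > (0 : ℝ), ∀ᶠ y in 𝓝 x, V y - V x - ⟪p, y - x⟫ ≤ ε * ‖y - x‖ := by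
  have hquot : ∀ ε : ℝ, (∀ᶠ y in 𝓝[≠] x, (V y - V x - ⟪p, y - x⟫) / ‖y - x‖ ≤ ε) ↔
      ∀ᶠ y in 𝓝 x, V y - V x - ⟪p, y - x⟫ ≤ ε * ‖y - x‖ := by
    intro ε
    rw [eventually_nhdsWithin_iff]
    refine eventually_congr (Eventually.of_forall fun y => ?_)
    rcases eq_or_ne y x with rfl | hy
    · simp
    · rw [div_le_iff₀ (norm_pos_iff.2 (sub_ne_zero.2 hy))]
      exact ⟨fun h => h hy, fun h _ => h⟩
  simp only [← hquot]
  rw [superDiff, mem_ofPred_eq, limsup_le_iff']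
  constructor
  · intro h ε hε
    exact (h ε (EReal.coe_pos.2 hε)).mono fun y hy => EReal.coe_le_coe_iff.1 hy
  · intro h b hb
    obtain ⟨ε, hε, hεb⟩ := EReal.exists_between_coe_real hb
    exact (h ε (EReal.coe_pos.1 hε)).mono fun y hy => (EReal.coe_le_coe_iff.2 hy).trans hεb.le

theorem convex_superDiff : Convex ℝ (superDiff V x) := by
  intro p hp q hq a b ha hb hab
  rw [mem_superDiff_iff] at hp hq ⊢
  intro ε hε
  filter_upwards [hp ε hε, hq ε hε] with y hpy hqy
  calc V y - V x - ⟪a • p + b • q, y - x⟫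
      = a * (V y - V x - ⟪p, y - x⟫) + b * (V y - V x - ⟪q, y - x⟫) := by
        rw [inner_add_left, real_inner_smul_left, real_inner_smul_left]
        linear_combination (V y - V x) * hab.symm
    _ ≤ a * (ε * ‖y - x‖) + b * (ε * ‖y - x‖) :=
        add_le_add (mul_le_mul_of_nonneg_left hpy ha) (mul_le_mul_of_nonneg_left hqy hb)
    _ = ε * ‖y - x‖ := by rw [← add_mul, hab, one_mul]

theorem isClosed_superDiff : IsClosed (superDiff V x) := by
  refine isClosed_of_closure_subset fun p hp => mem_superDiff_iff.2 fun ε hε => ?_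
  obtain ⟨q, hq, hpq⟩ := Metric.mem_closure_iff.1 hp (ε / 2) (half_pos hε)
  filter_upwards [mem_superDiff_iff.1 hq (ε / 2) (half_pos hε)] with y hy
  have : ⟪q - p, y - x⟫ ≤ ε / 2 * ‖y - x‖ :=
    (real_inner_le_norm _ _).trans <| mul_le_mul_of_nonneg_right
      (by rw [← dist_eq_norm, dist_comm]; exact hpq.le) (norm_nonneg _)
  rw [inner_sub_left] at this
  linarith

theorem eventually_add_smul_le_of_mem_superDiff (hp : p ∈ superDiff V x)
    (w : EuclideanSpace ℝ (Fin K)) {ε : ℝ} (hε : 0 < ε) :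
    ∀ᶠ t in 𝓝[>] (0 : ℝ), V (x + t • w) ≤ V x + t * (⟪p, w⟫ + ε * ‖w‖) := by
  filter_upwards [(tendsto_add_smul_nhdsGT_zero x w).eventually (mem_superDiff_iff.1 hp ε hε),
    self_mem_nhdsWithin] with t h (ht : 0 < t)
  simp only [add_sub_cancel_left, inner_smul_right, norm_smul, Real.norm_of_nonneg ht.le] at h
  linarith

variable {Z : Type*} {g : EuclideanSpace ℝ (Fin K) → Z → ℝ} {D : Set Z}
  {Dg : Z → EuclideanSpace ℝ (Fin K)}

theorem mem_superDiff_envelope (hbdd : ∀ y, BddBelow (g y '' D))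
    (hdiff : HasUniformGradientAt g Dg D x) {z : Z} (hz : z ∈ D) (hzx : envelope g D x = g x z) :
    Dg z ∈ superDiff (envelope g D) x := by
  refine mem_superDiff_iff.2 fun ε hε => ?_
  obtain ⟨δ, hδ, hgδ⟩ := hdiff ε hε
  filter_upwards [Metric.ball_mem_nhds x hδ] with y hy
  have := le_of_abs_le (hgδ z hz y (by rwa [← dist_eq_norm]))
  linarith [envelope_le (hbdd y) hz]

theorem superDiff_envelope_subset [TopologicalSpace Z] (hne : D.Nonempty) (hcomp : IsCompact D)
    (hbdd : ∀ y, BddBelow (g y '' D)) (hdiff : HasUniformGradientAt g Dg D x)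
    (hDg : ContinuousOn Dg D) (hlsc : LowerSemicontinuousOn (g x) D) :
    superDiff (envelope g D) x ⊆
      closure (convexHull ℝ (Dg '' {z ∈ D | envelope g D x = g x z})) := by
  intro p hp
  by_contra hpC
  obtain ⟨w, u, hpu, hu⟩ :=
    exists_inner_lt_of_notMem_of_convex (convex_convexHull ℝ _).closure isClosed_closure hpC
  have hmin : ∀ z ∈ D, envelope g D x = g x z → u < ⟪Dg z, w⟫ := fun z hz hzx =>
    hu _ (subset_closure (subset_convexHull ℝ _ ⟨z, ⟨hz, hzx⟩, rfl⟩))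
  obtain ⟨ε, hε, hεu⟩ := exists_pos_mul_lt (sub_pos.2 hpu) (2 * ‖w‖)
  obtain ⟨t, hlow, hup, ht⟩ := ((eventually_le_envelope_add_smul hne hcomp (hbdd x) hdiff hDg
    hlsc hmin hε).and ((eventually_add_smul_le_of_mem_superDiff hp w hε).and
    self_mem_nhdsWithin)).exists
  have : t * (u - ε * ‖w‖) ≤ t * (⟪p, w⟫ + ε * ‖w‖) := by linarith
  linarith [le_of_mul_le_mul_left this (show (0 : ℝ) < t from ht)]

end SuperDiff

/-- envelope theorem, superdifferential part: for
`V(y) = inf_{z∈D} g(y,z)` with `D` compact nonempty, `g` bounded on `ℝ^K × D`,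
`g(·,z)` differentiable at `x` uniformly in `z ∈ D` with derivatives `Dg z`,
`z ↦ Dg z` continuous on `D` and `z ↦ g(x,z)` lower semicontinuous on `D`,
the set `Y(x) = {Dg z : z ∈ argmin}` is nonempty and
`D⁺V(x) = closed convex hull of Y(x)`. -/
theorem stmt5 {K m : ℕ}
    (D : Set (EuclideanSpace ℝ (Fin m))) (hne : D.Nonempty) (hcomp : IsCompact D)
    (x : EuclideanSpace ℝ (Fin K))
    (g : EuclideanSpace ℝ (Fin K) → EuclideanSpace ℝ (Fin m) → ℝ)
    (Dg : EuclideanSpace ℝ (Fin m) → EuclideanSpace ℝ (Fin K))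
    (hbdd : ∃ M : ℝ, ∀ y, ∀ z ∈ D, |g y z| ≤ M)
    (hdiff : ∀ ε > (0 : ℝ), ∃ δ > (0 : ℝ), ∀ z ∈ D, ∀ y,
      ‖y - x‖ < δ → |g y z - g x z - ⟪Dg z, y - x⟫| ≤ ε * ‖y - x‖)
    (hDgcont : ContinuousOn Dg D)
    (hglsc : LowerSemicontinuousOn (fun z => g x z) D)
    (V : EuclideanSpace ℝ (Fin K) → ℝ)
    (hV : ∀ y, V y = sInf ((fun z => g y z) '' D))
    (Pt : Set (EuclideanSpace ℝ (Fin m))) (hPt : Pt = {z ∈ D | V x = g x z})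
    (Y : Set (EuclideanSpace ℝ (Fin K))) (hY : Y = Dg '' Pt) :
    Y.Nonempty ∧ superDiff V x = closure (convexHull ℝ Y) := by
  obtain ⟨M, hM⟩ := hbdd
  have hbdd : ∀ y, BddBelow (g y '' D) := fun y =>
    ⟨-M, forall_mem_image.2 fun z hz => neg_le_of_abs_le (hM y z hz)⟩
  obtain rfl : V = envelope g D := funext hV
  subst hPt hY
  obtain ⟨z₀, hz₀, hz₀x⟩ := exists_envelope_eq hne hcomp hglsc
  refine ⟨Nonempty.image Dg ⟨z₀, hz₀, hz₀x⟩,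
    subset_antisymm (superDiff_envelope_subset hne hcomp hbdd hdiff hDgcont hglsc) ?_⟩
  refine closure_minimal (convexHull_min ?_ convex_superDiff) isClosed_superDiff
  rintro _ ⟨z, ⟨hz, hzx⟩, rfl⟩
  exact mem_superDiff_envelope hbdd hdiff hz hzx
end

section
/- Let D ⊆ ℝ^K be a nonempty compact set and let x : ℝ → ℝ^K be differentiable. Suppose that for every t ≥ 0 and every nearest point p ∈ P̃_D(x(t)) := {z ∈ D : ‖x(t) − z‖ = infDist(x(t), D)}, there exists c ∈ ℝ^K with x'(t) = c − x(t) and ⟨c − p, x(t) − p⟩ ≤ 0. Then for every t ≥ 0, infDist(x(t), D)² ≤ infDist(x(0), D)² · e^{−2t}; in particular x(t) converges to D as t → ∞. -/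
open Filter Topology Metric
open scoped RealInnerProductSpace

/-- Lyapunov decay for non-convex targets: if along the
differentiable trajectory `x(·)`, for every `t ≥ 0` and every nearest point
`p ∈ P̃_D(x(t))` there is `c` with `x'(t) = c − x(t)` and
`⟪c − p, x(t) − p⟫ ≤ 0`, then `infDist(x(t),D)² ≤ infDist(x(0),D)²·e^{−2t}`;
in particular `x(t)` converges to `D`. -/
theorem stmt9 {K : ℕ} (D : Set (EuclideanSpace ℝ (Fin K)))
    (hne : D.Nonempty) (hcomp : IsCompact D)
    (x : ℝ → EuclideanSpace ℝ (Fin K)) (hx : Differentiable ℝ x)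
    (hdrift : ∀ t : ℝ, 0 ≤ t → ∀ p ∈ D, ‖x t - p‖ = infDist (x t) D →
      ∃ c : EuclideanSpace ℝ (Fin K),
        deriv x t = c - x t ∧ ⟪c - p, x t - p⟫ ≤ 0) :
    (∀ t : ℝ, 0 ≤ t →
        infDist (x t) D ^ 2 ≤ infDist (x 0) D ^ 2 * Real.exp (-2 * t)) ∧
      Tendsto (fun t => infDist (x t) D) atTop (𝓝 0) := by
  set v : ℝ → ℝ := fun t => infDist (x t) D ^ 2 with hv
  have hvcont : Continuous v :=
    ((continuous_infDist_pt D).comp hx.continuous).pow 2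
  -- key Dini derivative estimate
  have hf' : ∀ t ∈ Set.Ici (0 : ℝ), ∀ r, -2 * v t < r →
      ∃ᶠ z in 𝓝[>] t, slope v t z < r := by
    intro t ht r hr
    obtain ⟨p, hpD, hpdist⟩ := hcomp.exists_infDist_eq_dist hne (x t)
    have hnorm : ‖x t - p‖ = infDist (x t) D := by
      rw [hpdist, dist_eq_norm]
    obtain ⟨c, hc, hip⟩ := hdrift t ht p hpD hnorm
    -- g z = ‖x z - p‖ ^ 2
    set g : ℝ → ℝ := fun z => ‖x z - p‖ ^ 2 with hg
    have hgd : HasDerivAt g (2 * ⟪x t - p, deriv x t⟫) t := by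
      have h1 : HasDerivAt (fun z => x z - p) (deriv x t) t :=
        ((hx t).hasDerivAt).sub_const p
      have h2 : HasDerivAt (fun z => ⟪x z - p, x z - p⟫)
          (⟪x t - p, deriv x t⟫ + ⟪deriv x t, x t - p⟫) t := h1.inner ℝ h1
      have : HasDerivAt (fun z => ⟪x z - p, x z - p⟫)
          (2 * ⟪x t - p, deriv x t⟫) t := by
        convert h2 using 1
        rw [real_inner_comm (deriv x t) (x t - p)]; ring
      convert this using 1
      funext z
      exact (real_inner_self_eq_norm_sq _).symm
    have hglt : 2 * ⟪x t - p, deriv x t⟫ < r := by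
      refine lt_of_le_of_lt ?_ hr
      have heq : ⟪x t - p, deriv x t⟫ = ⟪c - p, x t - p⟫ - ‖x t - p‖ ^ 2 := by
        rw [hc, show c - x t = (c - p) - (x t - p) by abel, inner_sub_right,
          real_inner_self_eq_norm_sq, real_inner_comm]
      have hvt : v t = ‖x t - p‖ ^ 2 := by simp only [hv]; rw [hnorm]
      rw [heq, hvt]
      nlinarith [hip]
    have hslope : Tendsto (slope g t) (𝓝[>] t) (𝓝 (2 * ⟪x t - p, deriv x t⟫)) :=
      ((hasDerivAt_iff_tendsto_slope.mp hgd).mono_left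
        (nhdsWithin_mono t fun z hz => ne_of_gt hz))
    have hev : ∀ᶠ z in 𝓝[>] t, slope g t z < r :=
      hslope.eventually (Filter.Tendsto.eventually_lt_const hglt tendsto_id)
    have hvle : ∀ᶠ z in 𝓝[>] t, slope v t z < r := by
      filter_upwards [hev, self_mem_nhdsWithin] with z hz (hzt : t < z)
      refine lt_of_le_of_lt ?_ hz
      have hvz : v z ≤ g z := by
        rw [hv, hg]
        have h1 : infDist (x z) D ≤ ‖x z - p‖ := by
          rw [← dist_eq_norm]; exact infDist_le_dist_of_mem hpD
        exact pow_le_pow_left₀ infDist_nonneg h1 2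
      have hvt : v t = g t := by simp only [hv, hg]; rw [hnorm]
      rw [slope_def_field, slope_def_field, div_le_div_iff_of_pos_right (by linarith : (0:ℝ) < z - t)]
      linarith
    exact hvle.frequently
  -- Gronwall with ε-perturbed bound
  have key : ∀ T : ℝ, 0 ≤ T → ∀ ε : ℝ, 0 < ε →
      v T ≤ v 0 * Real.exp (-2 * T) + ε * Real.exp (-T) := by
    intro T hT ε hε
    set B : ℝ → ℝ := fun s => v 0 * Real.exp (-2 * s) + ε * Real.exp (-s) with hB
    have hB' : ∀ s : ℝ, HasDerivAt B
        (v 0 * (Real.exp (-2 * s) * -2) + ε * (Real.exp (-s) * -1)) s := by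
      intro s
      have h1 : HasDerivAt (fun s : ℝ => Real.exp (-2 * s)) (Real.exp (-2 * s) * -2) s := by
        simpa using ((hasDerivAt_id s).const_mul (-2)).exp
      have h2 : HasDerivAt (fun s : ℝ => Real.exp (-s)) (Real.exp (-s) * -1) s := by
        simpa using (hasDerivAt_id s).neg.exp
      exact (h1.const_mul (v 0)).add (h2.const_mul ε)
    have := image_le_of_liminf_slope_right_lt_deriv_boundary
      (f := v) (f' := fun s => -2 * v s) (a := 0) (b := T)
      (hvcont.continuousOn)
      (fun s hs r hr => hf' s hs.1 r hr)
      (by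
        show v 0 ≤ B 0
        rw [hB]; simp; positivity)
      hB'
      (by
        intro s hs hsB
        show -2 * v s < _
        rw [hsB]
        simp only [hB]
        have he1 : (0:ℝ) < Real.exp (-s) := Real.exp_pos _
        have he2 : (0:ℝ) ≤ v 0 * Real.exp (-2 * s) := by
          have : (0:ℝ) ≤ v 0 := by rw [hv]; positivity
          positivity
        nlinarith)
      (x := T) ⟨hT, le_refl T⟩
    simpa [hB] using this
  have main : ∀ t : ℝ, 0 ≤ t → v t ≤ v 0 * Real.exp (-2 * t) := by
    intro t ht
    refine le_of_forall_pos_le_add fun ε hε => ?_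
    have := key t ht ε hε
    have hexp : Real.exp (-t) ≤ 1 := Real.exp_le_one_iff.mpr (by linarith)
    nlinarith [Real.exp_pos (-t)]
  refine ⟨main, ?_⟩
  -- convergence
  have hbound : ∀ᶠ t in atTop, infDist (x t) D ≤
      Real.sqrt (v 0) * Real.exp (-t) := by
    filter_upwards [eventually_ge_atTop (0:ℝ)] with t ht
    have h1 : infDist (x t) D = Real.sqrt (v t) := by
      rw [hv, Real.sqrt_sq infDist_nonneg]
    rw [h1]
    have h2 : Real.sqrt (v t) ≤ Real.sqrt (v 0 * Real.exp (-2 * t)) :=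
      Real.sqrt_le_sqrt (main t ht)
    refine h2.trans_eq ?_
    rw [Real.sqrt_mul (by rw [hv]; positivity)]
    congr 1
    rw [show (-2 : ℝ) * t = -t + -t by ring, Real.exp_add,
      Real.sqrt_mul_self (Real.exp_nonneg _)]
  have hzero : Tendsto (fun t : ℝ => Real.sqrt (v 0) * Real.exp (-t)) atTop (𝓝 0) := by
    have := Real.tendsto_exp_neg_atTop_nhds_zero
    simpa using this.const_mul (Real.sqrt (v 0))
  exact squeeze_zero' (Eventually.of_forall fun t => infDist_nonneg) hbound hzero
end

section
/- Let (Ω, ℱ, μ) be a probability space with a filtration (ℱ_n)_{n≥0}, let κ ∈ ℝ and C ≥ 0. Let (V_n)_{n≥0} and (K_n)_{n≥0} be sequences of integrable random variables with V_n ℱ_n-measurable and |V_n| ≤ C almost surely for all n. Suppose that E[ |K_n − κ + E[V_{n+1} | ℱ_n] − V_n| ] → 0 as n → ∞. Then (1/n)·∑_{m=0}^{n−1} E[K_m] → κ as n → ∞. -/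
open Filter Topology MeasureTheory

/-- probabilistic form of the average-cost optimality argument:
if `(V_n)` is adapted, uniformly bounded by `C` and the expected
dynamic-programming residual `E[|K_n − κ + E[V_{n+1}|ℱ_n] − V_n|]` tends to
zero, then the long-run average expected cost `(1/n)∑_{m<n} E[K_m]` converges
to `κ`. -/
theorem stmt11 {Ω : Type*} {mΩ : MeasurableSpace Ω} (μ : Measure Ω)
    [IsProbabilityMeasure μ] (ℱ : Filtration ℕ mΩ) (κ C : ℝ) (hC : 0 ≤ C)
    (V K : ℕ → Ω → ℝ)
    (hVint : ∀ n, Integrable (V n) μ) (hKint : ∀ n, Integrable (K n) μ)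
    (hVmeas : ∀ n, StronglyMeasurable[ℱ n] (V n))
    (hVbdd : ∀ n, ∀ᵐ ω ∂μ, |V n ω| ≤ C)
    (h : Tendsto
      (fun n => ∫ ω, |K n ω - κ + (μ[V (n + 1) | ℱ n]) ω - V n ω| ∂μ)
      atTop (𝓝 0)) :
    Tendsto (fun n : ℕ => (1 / (n : ℝ)) * ∑ m ∈ Finset.range n, ∫ ω, K m ω ∂μ)
      atTop (𝓝 κ) := by
  set e : ℕ → ℝ := fun n =>
    ∫ ω, K n ω ∂μ - κ + ∫ ω, V (n + 1) ω ∂μ - ∫ ω, V n ω ∂μ with he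
  -- bound on |∫ V n|
  have hVle : ∀ n, |∫ ω, V n ω ∂μ| ≤ C := by
    intro n
    calc |∫ ω, V n ω ∂μ| ≤ ∫ ω, |V n ω| ∂μ := by
          simpa [Real.norm_eq_abs] using
            norm_integral_le_integral_norm (μ := μ) (f := V n)
      _ ≤ ∫ _ω, C ∂μ := integral_mono_ae (hVint n).abs (integrable_const C) (hVbdd n)
      _ = C := by simp
  -- e n → 0
  have he_tend : Tendsto e atTop (𝓝 0) := by
    apply squeeze_zero_norm _ h
    intro n
    have heq : e n = ∫ ω, (K n ω - κ + (μ[V (n + 1) | ℱ n]) ω - V n ω) ∂μ := by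
      have hcE : Integrable (μ[V (n + 1) | ℱ n]) μ := integrable_condExp
      have h1 : Integrable (fun ω => K n ω - κ) μ := (hKint n).sub (integrable_const κ)
      have h2 : Integrable (fun ω => K n ω - κ + (μ[V (n + 1) | ℱ n]) ω) μ := h1.add hcE
      rw [integral_sub h2 (hVint n), integral_add h1 hcE,
        integral_sub (hKint n) (integrable_const κ), integral_condExp (ℱ.le n)]
      simp [he]
    rw [heq]
    exact (norm_integral_le_integral_norm _).trans (le_of_eq (by simp))
  -- Cesàro average of e → 0
  have hces : Tendsto (fun n : ℕ => ((n : ℝ)⁻¹) * ∑ i ∈ Finset.range n, e i)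
      atTop (𝓝 0) := he_tend.cesaro
  -- boundary term → 0
  have hbd : Tendsto (fun n : ℕ =>
      ((n : ℝ)⁻¹) * (∫ ω, V 0 ω ∂μ - ∫ ω, V n ω ∂μ)) atTop (𝓝 0) := by
    refine squeeze_zero_norm (a := fun n : ℕ => (2 * C) / n) ?_ ?_
    · intro n
      show ‖((n : ℝ))⁻¹ * (∫ ω, V 0 ω ∂μ - ∫ ω, V n ω ∂μ)‖ ≤ 2 * C / n
      rcases Nat.eq_zero_or_pos n with rfl | hn
      · simp
      · have hn' : (0 : ℝ) < n := by exact_mod_cast hn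
        rw [Real.norm_eq_abs, abs_mul, abs_inv, abs_of_pos hn', div_eq_inv_mul]
        gcongr
        calc |∫ ω, V 0 ω ∂μ - ∫ ω, V n ω ∂μ|
            ≤ |∫ ω, V 0 ω ∂μ| + |∫ ω, V n ω ∂μ| := abs_sub _ _
          _ ≤ C + C := add_le_add (hVle 0) (hVle n)
          _ = 2 * C := by ring
    · exact tendsto_const_div_atTop_nhds_zero_nat (2 * C)
  have key : Tendsto (fun n : ℕ => κ + (((n : ℝ)⁻¹) * ∑ i ∈ Finset.range n, e i
      + ((n : ℝ)⁻¹) * (∫ ω, V 0 ω ∂μ - ∫ ω, V n ω ∂μ))) atTop (𝓝 (κ + (0 + 0))) :=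
    tendsto_const_nhds.add (hces.add hbd)
  rw [add_zero, add_zero] at key
  refine key.congr' ?_
  filter_upwards [Ici_mem_atTop 1] with n hn
  have hn' : (0 : ℝ) < n := by exact_mod_cast (show 0 < n from hn)
  have hsum : ∑ m ∈ Finset.range n, ∫ ω, K m ω ∂μ
      = n * κ + (∑ i ∈ Finset.range n, e i + (∫ ω, V 0 ω ∂μ - ∫ ω, V n ω ∂μ)) := by
    have : ∀ m, ∫ ω, K m ω ∂μ = κ + (e m + (∫ ω, V m ω ∂μ - ∫ ω, V (m + 1) ω ∂μ)) := by
      intro m; simp only [he]; ring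
    simp only [this, Finset.sum_add_distrib, Finset.sum_const, Finset.card_range,
      nsmul_eq_mul, Finset.sum_range_sub' (fun m => ∫ ω, V m ω ∂μ)]
  rw [hsum, one_div, mul_add, mul_add, inv_mul_cancel_left₀ hn'.ne']
end

section
/- Let (Ω, ℱ, μ) be a probability space with a filtration (ℱ_n)_{n≥0}, let D ⊆ ℝ^K be a nonempty closed convex set, and let (c_n)_{n≥1} be a sequence of random vectors in ℝ^K with c_n ℱ_n-measurable and ‖c_n‖ ≤ 1 almost surely for all n. Define the average x_n := (1/n)·∑_{m=1}^{n} c_m (so that x_{n+1} = x_n + (1/(n+1))·(c_{n+1} − x_n)). Suppose the Blackwell drift condition holds: for every n ≥ 1, almost surely ⟨E[c_{n+1} | ℱ_n] − P_D(x_n), x_n − P_D(x_n)⟩ ≤ 0. Then infDist(x_n, D) → 0 almost surely as n → ∞. -/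
open Filter Topology MeasureTheory Metric
open scoped RealInnerProductSpace

/-!
Let `d n = infDist (x n) D` and `V = x n - P (x n)`, so that `d n = ‖V‖` and `P (x n) ∈ D`.
Expanding `‖x (n + 1) - P (x n)‖²` along `x (n + 1) = x n + (c (n + 1) - x n) / (n + 1)`, the
drift condition and the fact that `c (n + 1) - E[c (n + 1) | ℱ n]` is orthogonal in `L²` to the
`ℱ n`-measurable `V` give `E d (n + 1)² ≤ (1 - 2 / (n + 1)) E d n² + 4 / (n + 1)²`, hence
`E d n² = O(1 / n)`. Along the squares `n = k²` these bounds are summable, so `d (k²) → 0` almost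
surely, and between two consecutive squares the running average moves by `O(1 / k)` only.
-/

def IsMetricProjection {X : Type*} [PseudoMetricSpace X] (D : Set X) (P : X → X) : Prop :=
  ∀ y, P y ∈ D ∧ ∀ z ∈ D, dist y (P y) ≤ dist y z

namespace IsMetricProjection

theorem infDist_eq {X : Type*} [PseudoMetricSpace X] {D : Set X} {P : X → X}
    (hP : IsMetricProjection D P) (y : X) : infDist y D = dist y (P y) :=
  le_antisymm (infDist_le_dist_of_mem (hP y).1) ((le_infDist ⟨_, (hP y).1⟩).2 (hP y).2)

variable {E : Type*} [NormedAddCommGroup E] [InnerProductSpace ℝ E] {D : Set E} {P : E → E}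

theorem inner_sub_le_zero (hP : IsMetricProjection D P) (hD : Convex ℝ D) (y : E) {z : E}
    (hz : z ∈ D) : ⟪y - P y, z - P y⟫ ≤ 0 := by
  refine (norm_eq_iInf_iff_real_inner_le_zero hD (hP y).1).1 ?_ z hz
  have h := (hP.infDist_eq y).symm
  simp only [infDist_eq_iInf, dist_eq_norm] at h
  exact h

theorem lipschitzWith_one (hP : IsMetricProjection D P) (hD : Convex ℝ D) :
    LipschitzWith 1 P := by
  refine LipschitzWith.of_dist_le_mul fun y z => ?_
  rw [NNReal.coe_one, one_mul, dist_eq_norm, dist_eq_norm]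
  have hy := hP.inner_sub_le_zero hD y (hP z).1
  have hz := hP.inner_sub_le_zero hD z (hP y).1
  have hfirm : ‖P y - P z‖ ^ 2 ≤ ⟪y - z, P y - P z⟫ := by
    rw [← real_inner_self_eq_norm_sq]
    have : ⟪y - z, P y - P z⟫ - ⟪P y - P z, P y - P z⟫
        = -⟪y - P y, P z - P y⟫ - ⟪z - P z, P y - P z⟫ := by
      simp only [inner_sub_left, inner_sub_right, real_inner_comm]; ring
    linarith
  nlinarith [real_inner_le_norm (y - z) (P y - P z), norm_nonneg (P y - P z), norm_nonneg (y - z)]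

end IsMetricProjection

section RunningAverage

variable {E : Type*} [NormedAddCommGroup E] [NormedSpace ℝ E]

noncomputable def runningAvg (c : ℕ → E) (n : ℕ) : E := (n : ℝ)⁻¹ • ∑ m ∈ Finset.Icc 1 n, c m

theorem runningAvg_succ (c : ℕ → E) (n : ℕ) :
    runningAvg c (n + 1) = runningAvg c n + ((n : ℝ) + 1)⁻¹ • (c (n + 1) - runningAvg c n) := by
  rcases Nat.eq_zero_or_pos n with rfl | hn
  · simp [runningAvg]
  have hn' : (n : ℝ) ≠ 0 := by positivity
  simp only [runningAvg, Finset.sum_Icc_succ_top (by omega : 1 ≤ n + 1), Nat.cast_succ]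
  match_scalars
  · field_simp
    ring
  · field_simp

variable {c : ℕ → E} {b : ℝ}

theorem norm_runningAvg_le (hb : 0 ≤ b) (hc : ∀ m, 1 ≤ m → ‖c m‖ ≤ b) (n : ℕ) :
    ‖runningAvg c n‖ ≤ b := by
  rcases Nat.eq_zero_or_pos n with rfl | hn
  · simpa [runningAvg] using hb
  have hsum : ‖∑ m ∈ Finset.Icc 1 n, c m‖ ≤ n * b := by
    simpa using norm_sum_le_of_le _ fun m hm => hc m (Finset.mem_Icc.1 hm).1
  rw [runningAvg, norm_smul, Real.norm_eq_abs, abs_inv, Nat.abs_cast,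
    inv_mul_le_iff₀ (by positivity)]
  exact hsum

theorem norm_sub_runningAvg_le (hb : 0 ≤ b) (hc : ∀ m, 1 ≤ m → ‖c m‖ ≤ b) (n : ℕ) :
    ‖c (n + 1) - runningAvg c n‖ ≤ 2 * b := by
  linarith [norm_sub_le (c (n + 1)) (runningAvg c n), hc (n + 1) (by omega),
    norm_runningAvg_le hb hc n]

theorem dist_runningAvg_succ_le (hb : 0 ≤ b) (hc : ∀ m, 1 ≤ m → ‖c m‖ ≤ b) (n : ℕ) :
    dist (runningAvg c n) (runningAvg c (n + 1)) ≤ 2 * b / (n + 1) := by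
  rw [dist_comm, dist_eq_norm, runningAvg_succ, add_sub_cancel_left, norm_smul, Real.norm_eq_abs,
    abs_inv, abs_of_pos (by positivity), inv_mul_le_iff₀ (by positivity),
    mul_div_cancel₀ _ (by positivity)]
  exact norm_sub_runningAvg_le hb hc n

theorem infDist_runningAvg_le (hb : 0 ≤ b) (hc : ∀ m, 1 ≤ m → ‖c m‖ ≤ b) (D : Set E) (n : ℕ) :
    infDist (runningAvg c n) D ≤ infDist 0 D + b := by
  linarith [infDist_le_infDist_add_dist (x := runningAvg c n) (y := 0) (s := D),
    dist_zero_right (runningAvg c n), norm_runningAvg_le hb hc n]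

theorem MeasureTheory.StronglyAdapted.stronglyMeasurable_runningAvg {Ω : Type*}
    {mΩ : MeasurableSpace Ω} {ℱ : Filtration ℕ mΩ} {c : ℕ → Ω → E} (hc : StronglyAdapted ℱ c) (n : ℕ) :
    StronglyMeasurable[ℱ n] fun ω => runningAvg (fun m => c m ω) n :=
  (Finset.stronglyMeasurable_fun_sum _ fun m hm =>
    (hc m).mono (ℱ.mono (Finset.mem_Icc.1 hm).2)).fun_const_smul _

end RunningAverage

theorem norm_add_smul_sub_sq_le {E : Type*} [NormedAddCommGroup E] [InnerProductSpace ℝ E]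
    {y c e p : E} {γ b : ℝ} (hγ : 0 ≤ γ) (hdrift : ⟪e - p, y - p⟫ ≤ 0) (hcy : ‖c - y‖ ≤ b) :
    ‖y + γ • (c - y) - p‖ ^ 2
      ≤ (1 - 2 * γ) * ‖y - p‖ ^ 2 + 2 * γ * ⟪c - e, y - p⟫ + γ ^ 2 * b ^ 2 := by
  have hexpand : ‖y + γ • (c - y) - p‖ ^ 2 = (1 - 2 * γ) * ‖y - p‖ ^ 2 + 2 * γ * ⟪c - e, y - p⟫
      + 2 * γ * ⟪e - p, y - p⟫ + γ ^ 2 * ‖c - y‖ ^ 2 := by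
    rw [show y + γ • (c - y) - p = (y - p) + γ • (c - y) by abel, norm_add_sq_real,
      inner_smul_right, norm_smul, Real.norm_eq_abs, abs_of_nonneg hγ,
      ← real_inner_self_eq_norm_sq]
    simp only [inner_sub_left, inner_sub_right, real_inner_comm]
    ring
  have hsq : ‖c - y‖ ^ 2 ≤ b ^ 2 := pow_le_pow_left₀ (norm_nonneg _) hcy 2
  rw [hexpand]
  nlinarith [mul_nonneg hγ (sq_nonneg γ)]

section ConditionalExpectation

variable {Ω E : Type*} {m mΩ : MeasurableSpace Ω} {μ : Measure Ω}
  [NormedAddCommGroup E] [InnerProductSpace ℝ E] [CompleteSpace E]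

theorem integral_inner_sub_condExp_eq_zero [IsFiniteMeasure μ] (hm : m ≤ mΩ) {f V : Ω → E}
    (hf : Integrable f μ) (hV : StronglyMeasurable[m] V) {C : ℝ} (hVC : ∀ᵐ ω ∂μ, ‖V ω‖ ≤ C) :
    ∫ ω, ⟪f ω - (μ[f|m]) ω, V ω⟫ ∂μ = 0 := by
  have hint : ∀ g : Ω → E, Integrable g μ → Integrable (fun ω => ⟪g ω, V ω⟫) μ := fun g hg =>
    (innerSL ℝ).integrable_of_bilin_of_bdd_right C hg (hV.mono hm).aestronglyMeasurable hVC
  simp only [inner_sub_left]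
  rw [integral_sub (hint f hf) (hint _ integrable_condExp), sub_eq_zero, ← integral_condExp hm]
  exact integral_congr_ae
    (condExp_bilin_of_stronglyMeasurable_right (innerSL ℝ) hV (hint f hf) hf)

theorem integral_infDist_sq_step_le [IsProbabilityMeasure μ] (hm : m ≤ mΩ) {D : Set E}
    {P : E → E} (hP : IsMetricProjection D P) (hD : Convex ℝ D) {y c : Ω → E} {γ b R : ℝ}
    (hy : StronglyMeasurable[m] y) (hc : Integrable c μ) (hγ : 0 ≤ γ)
    (hR : ∀ᵐ ω ∂μ, infDist (y ω) D ≤ R) (hb : ∀ᵐ ω ∂μ, ‖c ω - y ω‖ ≤ b)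
    (hdrift : ∀ᵐ ω ∂μ, ⟪(μ[c|m]) ω - P (y ω), y ω - P (y ω)⟫ ≤ 0)
    (hint : Integrable (fun ω => infDist (y ω) D ^ 2) μ)
    (hint' : Integrable (fun ω => infDist (y ω + γ • (c ω - y ω)) D ^ 2) μ) :
    ∫ ω, infDist (y ω + γ • (c ω - y ω)) D ^ 2 ∂μ
      ≤ (1 - 2 * γ) * ∫ ω, infDist (y ω) D ^ 2 ∂μ + γ ^ 2 * b ^ 2 := by
  set V : Ω → E := fun ω => y ω - P (y ω)
  have hV : StronglyMeasurable[m] V :=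
    hy.sub ((hP.lipschitzWith_one hD).continuous.comp_stronglyMeasurable hy)
  have hVR : ∀ᵐ ω ∂μ, ‖V ω‖ ≤ R := by
    filter_upwards [hR] with ω hω
    rwa [hP.infDist_eq, dist_eq_norm] at hω
  have hnoise_int : Integrable (fun ω => ⟪c ω - (μ[c|m]) ω, V ω⟫) μ :=
    (innerSL ℝ).integrable_of_bilin_of_bdd_right R (hc.sub integrable_condExp)
      (hV.mono hm).aestronglyMeasurable hVR
  have hpointwise : ∀ᵐ ω ∂μ, infDist (y ω + γ • (c ω - y ω)) D ^ 2
      ≤ (1 - 2 * γ) * infDist (y ω) D ^ 2 + 2 * γ * ⟪c ω - (μ[c|m]) ω, V ω⟫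
        + γ ^ 2 * b ^ 2 := by
    filter_upwards [hb, hdrift] with ω hbω hdriftω
    have hle : infDist (y ω + γ • (c ω - y ω)) D ≤ ‖y ω + γ • (c ω - y ω) - P (y ω)‖ := by
      rw [← dist_eq_norm]; exact infDist_le_dist_of_mem (hP _).1
    rw [hP.infDist_eq (y ω), dist_eq_norm]
    exact (pow_le_pow_left₀ infDist_nonneg hle 2).trans (norm_add_smul_sub_sq_le hγ hdriftω hbω)
  have hmain_int : Integrable (fun ω => (1 - 2 * γ) * infDist (y ω) D ^ 2
      + 2 * γ * ⟪c ω - (μ[c|m]) ω, V ω⟫) μ := (hint.const_mul _).add (hnoise_int.const_mul _)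
  calc ∫ ω, infDist (y ω + γ • (c ω - y ω)) D ^ 2 ∂μ
      ≤ ∫ ω, ((1 - 2 * γ) * infDist (y ω) D ^ 2 + 2 * γ * ⟪c ω - (μ[c|m]) ω, V ω⟫
          + γ ^ 2 * b ^ 2) ∂μ :=
        integral_mono_ae hint' (hmain_int.add (integrable_const _)) hpointwise
    _ = (1 - 2 * γ) * ∫ ω, infDist (y ω) D ^ 2 ∂μ + γ ^ 2 * b ^ 2 := by
      rw [integral_add hmain_int (integrable_const _),
        integral_add (hint.const_mul _) (hnoise_int.const_mul _), integral_const_mul,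
        integral_const_mul, integral_inner_sub_condExp_eq_zero hm hc hV hVR]
      simp

end ConditionalExpectation

theorem le_div_of_succ_le_one_sub_two_div {A : ℕ → ℝ} {C : ℝ} (hA : ∀ n, 0 ≤ A n) (hC : 0 ≤ C)
    (hstep : ∀ n, 1 ≤ n →
      A (n + 1) ≤ (1 - 2 * ((n : ℝ) + 1)⁻¹) * A n + ((n : ℝ) + 1)⁻¹ ^ 2 * C)
    {n : ℕ} (hn : 1 ≤ n) : A n ≤ (A 1 + C) / n := by
  -- the weight `n ^ 2` turns the recursion into `(n + 1) ^ 2 A (n + 1) ≤ (n ^ 2 - 1) A n + C`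
  have hweighted : (n : ℝ) ^ 2 * A n ≤ A 1 + C * (n - 1) := by
    induction n, hn using Nat.le_induction with
    | base => simp
    | succ n hn ih =>
      have hn' : (1 : ℝ) ≤ n := by exact_mod_cast hn
      have h := mul_le_mul_of_nonneg_left (hstep n hn) (sq_nonneg ((n : ℝ) + 1))
      have e : ((n : ℝ) + 1) ^ 2 * ((1 - 2 * ((n : ℝ) + 1)⁻¹) * A n + ((n : ℝ) + 1)⁻¹ ^ 2 * C)
          = ((n : ℝ) ^ 2 - 1) * A n + C := by
        field_simp
        ring
      push_cast
      nlinarith [hA n]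
  have hn' : (1 : ℝ) ≤ n := by exact_mod_cast hn
  rw [le_div_iff₀ (by positivity)]
  nlinarith [hA 1, hA n]

theorem ae_tendsto_zero_of_summable_integral_norm {Ω E : Type*} {mΩ : MeasurableSpace Ω}
    {μ : Measure Ω} [NormedAddCommGroup E] {Y : ℕ → Ω → E} (hY : ∀ n, Integrable (Y n) μ)
    (hsum : Summable fun n => ∫ ω, ‖Y n ω‖ ∂μ) :
    ∀ᵐ ω ∂μ, Tendsto (fun n => Y n ω) atTop (𝓝 0) := by
  have hL1 : ∑' n, eLpNorm (Y n) 1 μ ≠ ⊤ := by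
    simp_rw [eLpNorm_one_eq_lintegral_enorm, ← ofReal_integral_norm_eq_lintegral_enorm (hY _)]
    rw [← ENNReal.ofReal_tsum_of_nonneg (fun n => integral_nonneg fun ω => norm_nonneg _) hsum]
    exact ENNReal.ofReal_ne_top
  filter_upwards [summable_norm_of_tsum_eLpNorm_ne_top le_rfl
    (fun n => (hY n).aestronglyMeasurable) hL1] with ω hω
  exact tendsto_zero_iff_norm_tendsto_zero.2 hω.tendsto_atTop_zero

theorem ae_tendsto_comp_sq_of_integral_sq_succ_le {Ω : Type*} {mΩ : MeasurableSpace Ω}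
    {μ : Measure Ω} {Y : ℕ → Ω → ℝ} {C : ℝ} (hC : 0 ≤ C)
    (hY : ∀ n, Integrable (fun ω => Y n ω ^ 2) μ)
    (hstep : ∀ n, 1 ≤ n → ∫ ω, Y (n + 1) ω ^ 2 ∂μ
      ≤ (1 - 2 * ((n : ℝ) + 1)⁻¹) * ∫ ω, Y n ω ^ 2 ∂μ + ((n : ℝ) + 1)⁻¹ ^ 2 * C) :
    ∀ᵐ ω ∂μ, Tendsto (fun k => Y (k ^ 2) ω) atTop (𝓝 0) := by
  have hsum : Summable fun k => ∫ ω, ‖Y ((k + 1) ^ 2) ω ^ 2‖ ∂μ := by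
    simp only [Real.norm_of_nonneg (sq_nonneg _)]
    refine Summable.of_nonneg_of_le (fun k => integral_nonneg fun ω => sq_nonneg _) (fun k => ?_)
      (((summable_nat_add_iff 1).2 (Real.summable_one_div_nat_pow.2 one_lt_two)).mul_left
        (∫ ω, Y 1 ω ^ 2 ∂μ + C))
    have := le_div_of_succ_le_one_sub_two_div (fun n => integral_nonneg fun ω => sq_nonneg (Y n ω))
      hC hstep (Nat.one_le_pow 2 (k + 1) k.succ_pos)
    simpa [div_eq_mul_inv] using this
  filter_upwards [ae_tendsto_zero_of_summable_integral_norm (fun k => hY ((k + 1) ^ 2)) hsum]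
    with ω hω
  refine (tendsto_add_atTop_iff_nat 1).1 (tendsto_zero_iff_abs_tendsto_zero _ |>.2 ?_)
  simpa [Function.comp_def, Real.sqrt_sq_eq_abs] using hω.sqrt

theorem tendsto_of_tendsto_comp_sq {α : Type*} [PseudoMetricSpace α] {u : ℕ → α} {a : α}
    {C : ℝ} (hstep : ∀ n, dist (u n) (u (n + 1)) ≤ C / (n + 1))
    (hsq : Tendsto (fun k => u (k ^ 2)) atTop (𝓝 a)) : Tendsto u atTop (𝓝 a) := by
  have hC : 0 ≤ C := by simpa using dist_nonneg.trans (hstep 0)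
  have hsqrt : Tendsto Nat.sqrt atTop atTop :=
    tendsto_atTop_atTop.2 fun b => ⟨b * b, fun m hm => Nat.le_sqrt.2 hm⟩
  -- between `s ^ 2` and `(s + 1) ^ 2` there are at most `2 s` steps, each shorter than `C / s ^ 2`
  have hblock : ∀ m, 1 ≤ m → dist (u (Nat.sqrt m ^ 2)) (u m) ≤ 2 * C / Nat.sqrt m := by
    intro m hm
    set s := Nat.sqrt m
    have hs : (1 : ℝ) ≤ s := by exact_mod_cast Nat.le_sqrt.2 hm
    have hlo : s ^ 2 ≤ m := by simpa [sq] using Nat.sqrt_le' m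
    have hhi : m - s ^ 2 ≤ 2 * s := by
      have h : m < (s + 1) ^ 2 := Nat.lt_succ_sqrt' m
      have e : (s + 1) ^ 2 = s ^ 2 + 2 * s + 1 := by ring
      omega
    calc dist (u (s ^ 2)) (u m) ≤ ∑ i ∈ Finset.Ico (s ^ 2) m, C / (s : ℝ) ^ 2 := by
          refine dist_le_Ico_sum_of_dist_le hlo fun {i} hi _ => (hstep i).trans ?_
          gcongr
          exact_mod_cast Nat.le_succ_of_le hi
      _ = (m - s ^ 2 : ℕ) * (C / (s : ℝ) ^ 2) := by simp
      _ ≤ (2 * s : ℕ) * (C / (s : ℝ) ^ 2) := by gcongr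
      _ = 2 * C / s := by push_cast; field_simp
  have hbound : Tendsto (fun m => dist (u (Nat.sqrt m ^ 2)) a + 2 * C / Nat.sqrt m) atTop
      (𝓝 0) := by
    simpa using ((tendsto_iff_dist_tendsto_zero.1 hsq).comp hsqrt).add
      ((tendsto_const_div_atTop_nhds_zero_nat (2 * C)).comp hsqrt)
  refine tendsto_iff_dist_tendsto_zero.2
    (squeeze_zero' (Eventually.of_forall fun _ => dist_nonneg) ?_ hbound)
  filter_upwards [eventually_ge_atTop 1] with m hm
  linarith [dist_triangle_left (u m) a (u (Nat.sqrt m ^ 2)), hblock m hm]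

theorem stmt15_general {K : ℕ} {Ω : Type*} {mΩ : MeasurableSpace Ω} (μ : Measure Ω)
    [IsProbabilityMeasure μ] (ℱ : Filtration ℕ mΩ)
    (D : Set (EuclideanSpace ℝ (Fin K)))
    (hconv : Convex ℝ D)
    (P : EuclideanSpace ℝ (Fin K) → EuclideanSpace ℝ (Fin K))
    (hP : ∀ y, P y ∈ D ∧ ∀ z ∈ D, dist y (P y) ≤ dist y z)
    (c : ℕ → Ω → EuclideanSpace ℝ (Fin K))
    (hmeas : ∀ n, StronglyMeasurable[ℱ n] (c n))
    (hbdd : ∀ n, 1 ≤ n → ∀ᵐ ω ∂μ, ‖c n ω‖ ≤ 1)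
    (x : ℕ → Ω → EuclideanSpace ℝ (Fin K))
    (hx : ∀ n ω, x n ω = ((n : ℝ)⁻¹) • ∑ m ∈ Finset.Icc 1 n, c m ω)
    (hdrift : ∀ n, 1 ≤ n → ∀ᵐ ω ∂μ,
      ⟪(μ[c (n + 1) | ℱ n]) ω - P (x n ω), x n ω - P (x n ω)⟫ ≤ 0) :
    ∀ᵐ ω ∂μ, Tendsto (fun n => infDist (x n ω) D) atTop (𝓝 0) := by
  obtain rfl : x = fun n ω => runningAvg (fun m => c m ω) n := funext fun n => funext (hx n)
  have hgood : ∀ᵐ ω ∂μ, ∀ m, 1 ≤ m → ‖c m ω‖ ≤ 1 := ae_all_iff.2 fun m =>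
    if hm : 1 ≤ m then (hbdd m hm).mono fun _ h _ => h else ae_of_all _ fun _ h => absurd h hm
  have hx_meas : ∀ n, StronglyMeasurable[ℱ n] fun ω => runningAvg (fun m => c m ω) n :=
    StronglyAdapted.stronglyMeasurable_runningAvg hmeas
  set d : ℕ → Ω → ℝ := fun n ω => infDist (runningAvg (fun m => c m ω) n) D with hd
  have hd_le : ∀ n, ∀ᵐ ω ∂μ, d n ω ≤ infDist 0 D + 1 := fun n =>
    hgood.mono fun ω hω => infDist_runningAvg_le zero_le_one hω D n
  have hd_int : ∀ n, Integrable (fun ω => d n ω ^ 2) μ := fun n =>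
    Integrable.of_bound ((((continuous_infDist_pt D).pow 2).comp_stronglyMeasurable
      ((hx_meas n).mono (ℱ.le n))).aestronglyMeasurable) ((infDist 0 D + 1) ^ 2)
      ((hd_le n).mono fun ω hω => by
        rw [Real.norm_of_nonneg (sq_nonneg _)]
        exact pow_le_pow_left₀ infDist_nonneg hω 2)
  have hstep : ∀ n, 1 ≤ n → ∫ ω, d (n + 1) ω ^ 2 ∂μ
      ≤ (1 - 2 * ((n : ℝ) + 1)⁻¹) * ∫ ω, d n ω ^ 2 ∂μ + ((n : ℝ) + 1)⁻¹ ^ 2 * (2 * 1) ^ 2 := by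
    intro n hn
    have hd_succ := hd_int (n + 1)
    simp only [hd, runningAvg_succ] at hd_succ ⊢
    exact integral_infDist_sq_step_le (ℱ.le n) hP hconv (hx_meas n)
      (Integrable.of_bound ((hmeas (n + 1)).mono (ℱ.le _)).aestronglyMeasurable 1
        (hbdd (n + 1) (by omega))) (by positivity) (hd_le n)
      (hgood.mono fun ω hω => norm_sub_runningAvg_le zero_le_one hω n) (hdrift n hn) (hd_int n)
      hd_succ
  filter_upwards [ae_tendsto_comp_sq_of_integral_sq_succ_le (sq_nonneg _) hd_int hstep, hgood]
    with ω hsq hω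
  exact tendsto_of_tendsto_comp_sq (fun n => ((lipschitz_infDist_pt D).dist_le_mul _ _).trans
    (by simpa using dist_runningAvg_succ_le zero_le_one hω n)) hsq

/-- stochastic-approximation core of Blackwell approachability:
if `(c_n)` is an adapted sequence of random vectors with `‖c_n‖ ≤ 1` a.s.,
`x_n = (1/n)∑_{m=1}^n c_m` is the running average, `P` is the metric
projection onto the nonempty closed convex set `D`, and the Blackwell drift
condition `⟪E[c_{n+1}|ℱ_n] − P(x_n), x_n − P(x_n)⟫ ≤ 0` holds a.s. for every
`n ≥ 1`, then `infDist(x_n, D) → 0` almost surely. -/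
theorem stmt15 {K : ℕ} {Ω : Type*} {mΩ : MeasurableSpace Ω} (μ : Measure Ω)
    [IsProbabilityMeasure μ] (ℱ : Filtration ℕ mΩ)
    (D : Set (EuclideanSpace ℝ (Fin K)))
    (hne : D.Nonempty) (hcl : IsClosed D) (hconv : Convex ℝ D)
    (P : EuclideanSpace ℝ (Fin K) → EuclideanSpace ℝ (Fin K))
    (hP : ∀ y, P y ∈ D ∧ ∀ z ∈ D, dist y (P y) ≤ dist y z)
    (c : ℕ → Ω → EuclideanSpace ℝ (Fin K))
    (hmeas : ∀ n, StronglyMeasurable[ℱ n] (c n))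
    (hbdd : ∀ n, 1 ≤ n → ∀ᵐ ω ∂μ, ‖c n ω‖ ≤ 1)
    (x : ℕ → Ω → EuclideanSpace ℝ (Fin K))
    (hx : ∀ n ω, x n ω = ((n : ℝ)⁻¹) • ∑ m ∈ Finset.Icc 1 n, c m ω)
    (hdrift : ∀ n, 1 ≤ n → ∀ᵐ ω ∂μ,
      ⟪(μ[c (n + 1) | ℱ n]) ω - P (x n ω), x n ω - P (x n ω)⟫ ≤ 0) :
    ∀ᵐ ω ∂μ, Tendsto (fun n => infDist (x n ω) D) atTop (𝓝 0) :=
  stmt15_general μ ℱ D hconv P hP c hmeas hbdd x hx hdrift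
end
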